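/- For any fixed linear order on [n], a set S of atoms is nbb in G if and only if S is an NBB set in the lattice of line-closed sets of G with atoms ordered by the given linear order. Here a set T is bounded below iff there exists i ∈ ℓc(T) with i < min(T), and S is NBB iff no subset of S is bounded below. -/

import Mathlib

/-- A set `S` is line-closed in the matroid `M` if it contains the closure of
each pair of its elements. -/
def IsLineClosed {n : ℕ} (M : Matroid (Fin n)) (S : Set (Fin n)) : Prop :=
  ∀ i ∈ S, ∀ j ∈ S, M.closure {i, j} ⊆ S

/-- The line-closure of `S`: the intersection of all line-closed sets containing `S`. -/
def lineClosure {n : ℕ} (M : Matroid (Fin n)) (S : Set (Fin n)) : Set (Fin n) :=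
  ⋂₀ {T | S ⊆ T ∧ IsLineClosed M T}

/-- We encode a linear ordering of `[n]` by a permutation `π`: the element `i` comes
before `j` when `π i ≤ π j`.  `IsMinWrt π S m` says `m` is the minimum of `S` for this
ordering. -/
def IsMinWrt {n : ℕ} (π : Equiv.Perm (Fin n)) (S : Set (Fin n)) (m : Fin n) : Prop :=
  m ∈ S ∧ ∀ j ∈ S, π m ≤ π j

/-- `S` is an nbb set for the linear order `π`: each element is the minimum of the
line-closure of the set of its successors (itself included) in `S`. -/
def IsNbb {n : ℕ} (M : Matroid (Fin n)) (π : Equiv.Perm (Fin n))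
    (S : Finset (Fin n)) : Prop :=
  ∀ i ∈ S, IsMinWrt π (lineClosure M {j | j ∈ S ∧ π i ≤ π j}) i

/-- `S` is an nbc set for the linear order `π` (Björner's characterization): each
element is the minimum of the matroid closure of the set of its successors in `S`. -/
def IsNbc {n : ℕ} (M : Matroid (Fin n)) (π : Equiv.Perm (Fin n))
    (S : Finset (Fin n)) : Prop :=
  ∀ i ∈ S, IsMinWrt π (M.closure {j | j ∈ S ∧ π i ≤ π j}) i

/-- `T` is bounded below (for the linear order `π`): `T` is nonempty and some element
of its line-closure strictly precedes every element of `T` (i.e. precedes `min T`). -/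
def IsBoundedBelow {n : ℕ} (M : Matroid (Fin n)) (π : Equiv.Perm (Fin n))
    (T : Finset (Fin n)) : Prop :=
  T.Nonempty ∧ ∃ a ∈ lineClosure M ↑T, ∀ t ∈ T, π a < π t

/-- `S` is NBB: no subset of `S` is bounded below. -/
def IsNBB {n : ℕ} (M : Matroid (Fin n)) (π : Equiv.Perm (Fin n))
    (S : Finset (Fin n)) : Prop :=
  ∀ T ⊆ S, ¬ IsBoundedBelow M π T

section LineClosure

variable {n : ℕ} (M : Matroid (Fin n))

lemma subset_lineClosure (S : Set (Fin n)) : S ⊆ lineClosure M S :=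
  fun _ hx _ hT => hT.1 hx

lemma lineClosure_mono {A B : Set (Fin n)} (h : A ⊆ B) : lineClosure M A ⊆ lineClosure M B :=
  fun _ hx T hT => hx T ⟨h.trans hT.1, hT.2⟩

end LineClosure

lemma isBoundedBelow_iff_of_isMinWrt {n : ℕ} (M : Matroid (Fin n)) (π : Equiv.Perm (Fin n))
    {T : Finset (Fin n)} {i : Fin n} (hi : IsMinWrt π ↑T i) :
    IsBoundedBelow M π T ↔ ∃ a ∈ lineClosure M ↑T, π a < π i := by
  refine ⟨fun ⟨_, a, ha, hlt⟩ => ⟨a, ha, hlt i hi.1⟩, fun ⟨a, ha, hlt⟩ => ?_⟩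
  exact ⟨⟨i, hi.1⟩, a, ha, fun t ht => hlt.trans_le (hi.2 t ht)⟩

/- Among the subsets of `S` with minimum `i`, the successor set `{j ∈ S | i ≤ j}` is the
largest, so by monotonicity of line-closure it is the only one that needs testing. -/
theorem nbb_iff_NBB_general {n : ℕ} (M : Matroid (Fin n))
    (π : Equiv.Perm (Fin n)) (S : Finset (Fin n)) :
    IsNbb M π S ↔ IsNBB M π S := by
  constructor
  · rintro hnbb T hTS hT
    obtain ⟨i, hiT, hmin⟩ := T.exists_min_image (fun j => π j) hT.1
    obtain ⟨a, ha, hlt⟩ := (isBoundedBelow_iff_of_isMinWrt M π ⟨hiT, hmin⟩).1 hT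
    have hsucc : (↑T : Set (Fin n)) ⊆ {j | j ∈ S ∧ π i ≤ π j} :=
      fun t ht => ⟨hTS ht, hmin t ht⟩
    exact hlt.not_ge ((hnbb i (hTS hiT)).2 a (lineClosure_mono M hsucc ha))
  · intro hNBB i hi
    set T := S.filter (fun j => π i ≤ π j)
    have hT : (↑T : Set (Fin n)) = {j | j ∈ S ∧ π i ≤ π j} := Finset.coe_filter _ _
    have hmin : IsMinWrt π ↑T i := hT ▸ ⟨⟨hi, le_rfl⟩, fun _ hj => hj.2⟩
    refine ⟨subset_lineClosure M _ ⟨hi, le_rfl⟩, fun a ha => ?_⟩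
    by_contra! hlt
    exact hNBB T (Finset.filter_subset _ _)
      ((isBoundedBelow_iff_of_isMinWrt M π hmin).2 ⟨a, hT ▸ ha, hlt⟩)

/-- A set is nbb iff it is an NBB set (in the sense of Blass--Sagan) of the lattice of
line-closed sets, for the given linear order on the atoms. -/
theorem nbb_iff_NBB {n : ℕ} (M : Matroid (Fin n)) (hE : M.E = Set.univ)
    (π : Equiv.Perm (Fin n)) (S : Finset (Fin n)) :
    IsNbb M π S ↔ IsNBB M π S :=
  nbb_iff_NBB_general M π S
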